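/- Let I = [a,b), 1 ≤ p < ∞, and let a U^p-atom be a step function a(t) = Σ_{k=1}^K φ_{k-1} 1_{[t_{k-1},t_k)}(t) with a = t₀ < … < t_K = b and Σ_{k=1}^K ‖φ_{k-1}‖^p_{L²ₓ} = 1. Then every U^p-atom a satisfies ‖a‖_{V^p(I)} ≤ 2, and consequently ‖u‖_{V^p(I)} ≤ 2‖u‖_{U^p(I)} for every u in the atomic space U^p(I). -/

import Mathlib

/-!
Sample an atom `Σ_k φ_k 1_{[t_k, t_{k+1})}` along a partition `s₀ ≤ … ≤ s_J`. Its value at `s_j`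
is `ψ (n_j)`, where `n_j` counts the points `t_k ≤ s_j` and `ψ` lists `0, φ₀, …, φ_{K-1}, 0`, so
`n` is monotone. An increment `ψ (n_{j+1}) - ψ (n_j)` vanishes unless `n` jumps at `j`, and at the
jumps both `n_{j+1}` and `n_j` are injective in `j`. Minkowski's inequality therefore bounds the
`ℓ^p` norm of the increments by twice `(Σ_k ‖φ_k‖^p)^{1/p} = 1`. The bound for `u = Σ λ_k a_k`
follows because the `ℓ^p` norm of the increments along a fixed partition is a continuous seminorm.
-/

/-- The set of partition sums defining the `V^p([a,b))`-norm. -/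
def variationSums {H : Type*} [NormedAddCommGroup H] (p : ℝ) (u : ℝ → H)
    (a b : ℝ) : Set ℝ :=
  {s | ∃ (K : ℕ) (t : Fin (K + 1) → ℝ), StrictMono t ∧ t 0 = a ∧ t (Fin.last K) = b ∧
    s = (∑ k : Fin K, ‖u (t k.succ) - u (t k.castSucc)‖ ^ p) ^ (1 / p)}

/-- A `U^p([a,b))`-atom: a step function `Σ_k φ_{k-1} 1_{[t_{k-1},t_k)}` subordinate to a
partition `a = t₀ < … < t_K = b` with `Σ_k ‖φ_{k-1}‖^p = 1`. -/
def IsUpAtom {H : Type*} [NormedAddCommGroup H] (p a b : ℝ) (f : ℝ → H) : Prop :=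
  ∃ (K : ℕ) (t : Fin (K + 1) → ℝ) (φ : Fin K → H),
    StrictMono t ∧ t 0 = a ∧ t (Fin.last K) = b ∧
    (∑ k : Fin K, ‖φ k‖ ^ p) = 1 ∧
    ∀ s : ℝ, f s = ∑ k : Fin K, if t k.castSucc ≤ s ∧ s < t k.succ then φ k else 0

open Finset

section MonotoneIndex

variable {ι : Type*} [LinearOrder ι] {K : ℕ} {n : Fin (K + 1) → ι}

lemma Monotone.strictMonoOn_succ_of_jumps (hn : Monotone n) :
    StrictMonoOn (fun j : Fin K => n j.succ) {j | n j.castSucc < n j.succ} :=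
  fun _ _ _ hj hij => (hn (Fin.succ_le_castSucc_iff.mpr hij)).trans_lt hj

lemma Monotone.strictMonoOn_castSucc_of_jumps (hn : Monotone n) :
    StrictMonoOn (fun j : Fin K => n j.castSucc) {j | n j.castSucc < n j.succ} :=
  fun _ hi _ _ hij => hi.trans_le (hn (Fin.succ_le_castSucc_iff.mpr hij))

theorem rpow_sum_norm_sub_comp_monotone_le {E : Type*} [SeminormedAddCommGroup E] {p : ℝ}
    (hp : 1 ≤ p) (ψ : ι → E) (hn : Monotone n) :
    (∑ j : Fin K, ‖ψ (n j.succ) - ψ (n j.castSucc)‖ ^ p) ^ (1 / p)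
      ≤ 2 * (∑ m ∈ univ.image n, ‖ψ m‖ ^ p) ^ (1 / p) := by
  have hp0 : 0 < p := by linarith
  set J : Finset (Fin K) := {j : Fin K | n j.castSucc < n j.succ}
  have hJ : ∑ j ∈ J, ‖ψ (n j.succ) - ψ (n j.castSucc)‖ ^ p
      = ∑ j : Fin K, ‖ψ (n j.succ) - ψ (n j.castSucc)‖ ^ p := by
    refine sum_filter_of_ne fun j _ hj => ?_
    refine (hn (Fin.castSucc_le_succ j)).lt_of_ne fun heq => hj ?_
    rw [heq, sub_self, norm_zero, Real.zero_rpow hp0.ne']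
  have hbound : ∀ g : Fin K → ι, Set.InjOn g J → (∀ j, g j ∈ univ.image n) →
      ∑ j ∈ J, ‖ψ (g j)‖ ^ p ≤ ∑ m ∈ univ.image n, ‖ψ m‖ ^ p := by
    intro g hg hgn
    rw [← sum_image (f := fun m => ‖ψ m‖ ^ p) hg]
    exact sum_le_sum_of_subset_of_nonneg (image_subset_iff.mpr fun j _ => hgn j)
      fun _ _ _ => by positivity
  have hinj {g : Fin K → ι} (hg : StrictMonoOn g {j | n j.castSucc < n j.succ}) :
      Set.InjOn g J :=
    hg.injOn.mono fun j hj => by simpa [J] using hj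
  calc (∑ j : Fin K, ‖ψ (n j.succ) - ψ (n j.castSucc)‖ ^ p) ^ (1 / p)
      ≤ (∑ j ∈ J, (‖ψ (n j.succ)‖ + ‖ψ (n j.castSucc)‖) ^ p) ^ (1 / p) := by
        rw [← hJ]
        gcongr
        exact norm_sub_le _ _
    _ ≤ (∑ j ∈ J, ‖ψ (n j.succ)‖ ^ p) ^ (1 / p) + (∑ j ∈ J, ‖ψ (n j.castSucc)‖ ^ p) ^ (1 / p) :=
        Real.Lp_add_le_of_nonneg J hp (fun _ _ => norm_nonneg _) fun _ _ => norm_nonneg _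
    _ ≤ 2 * (∑ m ∈ univ.image n, ‖ψ m‖ ^ p) ^ (1 / p) := by
        rw [two_mul]
        gcongr
        · exact hbound _ (hinj hn.strictMonoOn_succ_of_jumps) fun _ =>
            mem_image_of_mem n (mem_univ _)
        · exact hbound _ (hinj hn.strictMonoOn_castSucc_of_jumps) fun _ =>
            mem_image_of_mem n (mem_univ _)

end MonotoneIndex

section StepFunction

variable {K : ℕ}

noncomputable def partitionIndex (t : Fin (K + 1) → ℝ) (x : ℝ) : ℕ := #{m | t m ≤ x}

lemma partitionIndex_mono (t : Fin (K + 1) → ℝ) : Monotone (partitionIndex t) :=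
  fun _ _ hxy => card_le_card <| monotone_filter_right _ fun _ _ h => h.trans hxy

lemma lt_partitionIndex_iff {t : Fin (K + 1) → ℝ} (ht : StrictMono t) (x : ℝ) (m : Fin (K + 1)) :
    (m : ℕ) < partitionIndex t x ↔ t m ≤ x := by
  constructor
  · intro h
    by_contra hx
    have hsub : ({m' | t m' ≤ x} : Finset (Fin (K + 1))) ⊆ Iio m := fun m' hm' =>
      mem_Iio.mpr (ht.lt_iff_lt.mp ((mem_filter.mp hm').2.trans_lt (not_le.mp hx)))
    have := card_le_card hsub
    rw [Fin.card_Iio] at this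
    exact (this.trans_lt h).false
  · intro h
    have hsub : Iic m ⊆ ({m' | t m' ≤ x} : Finset (Fin (K + 1))) := fun m' hm' =>
      mem_filter.mpr ⟨mem_univ _, (ht.monotone (mem_Iic.mp hm')).trans h⟩
    simpa [partitionIndex] using card_le_card hsub

lemma le_and_lt_iff_partitionIndex_eq {t : Fin (K + 1) → ℝ} (ht : StrictMono t) (x : ℝ)
    (k : Fin K) : t k.castSucc ≤ x ∧ x < t k.succ ↔ partitionIndex t x = k + 1 := by
  rw [← not_le (a := t k.succ), ← lt_partitionIndex_iff ht, ← lt_partitionIndex_iff ht]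
  simp only [Fin.val_castSucc, Fin.val_succ]
  omega

def stepValue {H : Type*} [Zero H] (φ : Fin K → H) : ℕ → H
  | 0 => 0
  | m + 1 => if h : m < K then φ ⟨m, h⟩ else 0

lemma stepValue_eq_sum {H : Type*} [AddCommMonoid H] (φ : Fin K → H) (c : ℕ) :
    stepValue φ c = ∑ k : Fin K, if c = k + 1 then φ k else 0 := by
  cases c with
  | zero => simp [stepValue]
  | succ c =>
    by_cases hc : c < K
    · rw [Fintype.sum_eq_single ⟨c, hc⟩ fun k hk =>
        if_neg fun h => hk (Fin.ext (Nat.succ_injective h).symm)]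
      simp [stepValue, hc]
    · simp only [stepValue, hc, dite_false]
      exact (sum_eq_zero fun k _ => if_neg fun h => hc (by omega)).symm

lemma sum_indicator_Ico_eq_stepValue {H : Type*} [AddCommMonoid H] {t : Fin (K + 1) → ℝ}
    (ht : StrictMono t) (φ : Fin K → H) (x : ℝ) :
    (∑ k : Fin K, if t k.castSucc ≤ x ∧ x < t k.succ then φ k else 0)
      = stepValue φ (partitionIndex t x) := by
  simp_rw [le_and_lt_iff_partitionIndex_eq ht, stepValue_eq_sum]

lemma sum_norm_stepValue_rpow_le {H : Type*} [SeminormedAddCommGroup H] {p : ℝ} (hp : 0 < p)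
    (φ : Fin K → H) (S : Finset ℕ) :
    ∑ m ∈ S, ‖stepValue φ m‖ ^ p ≤ ∑ k, ‖φ k‖ ^ p := by
  have hzero : ∀ m ∉ range (K + 1), ‖stepValue φ m‖ ^ p = 0 := by
    intro m hm
    rw [mem_range, not_lt] at hm
    obtain ⟨c, rfl⟩ : ∃ c, m = c + 1 := ⟨m - 1, by omega⟩
    simp [stepValue, show ¬c < K by omega, Real.zero_rpow hp.ne']
  calc ∑ m ∈ S, ‖stepValue φ m‖ ^ p = ∑ m ∈ S with m ∈ range (K + 1), ‖stepValue φ m‖ ^ p :=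
        (sum_filter_of_ne fun m _ hm => by_contra fun h => hm (hzero m h)).symm
    _ ≤ ∑ m ∈ range (K + 1), ‖stepValue φ m‖ ^ p :=
        sum_le_sum_of_subset_of_nonneg (fun m hm => (mem_filter.mp hm).2) fun _ _ _ => by positivity
    _ = ∑ k, ‖φ k‖ ^ p := by
        rw [sum_range_succ', ← Fin.sum_univ_eq_sum_range (fun m => ‖stepValue φ (m + 1)‖ ^ p)]
        simp [stepValue, Real.zero_rpow hp.ne']

end StepFunction

theorem IsUpAtom.rpow_sum_norm_sub_le_two {H : Type*} [NormedAddCommGroup H] {p a b : ℝ}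
    {f : ℝ → H} (hf : IsUpAtom p a b f) (hp : 1 ≤ p) {K : ℕ} {s : Fin (K + 1) → ℝ}
    (hs : Monotone s) :
    (∑ j : Fin K, ‖f (s j.succ) - f (s j.castSucc)‖ ^ p) ^ (1 / p) ≤ 2 := by
  obtain ⟨K, t, φ, ht, -, -, hφ, hf⟩ := hf
  have hfψ : f = stepValue φ ∘ partitionIndex t :=
    funext fun x => (hf x).trans (sum_indicator_Ico_eq_stepValue ht φ x)
  subst hfψ
  have hψ : (∑ m ∈ univ.image (partitionIndex t ∘ s), ‖stepValue φ m‖ ^ p) ^ (1 / p) ≤ 1 :=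
    Real.rpow_le_one (sum_nonneg fun _ _ => by positivity)
      (hφ ▸ sum_norm_stepValue_rpow_le (by linarith) φ _) (by positivity)
  calc _ ≤ 2 * (∑ m ∈ univ.image (partitionIndex t ∘ s), ‖stepValue φ m‖ ^ p) ^ (1 / p) :=
        rpow_sum_norm_sub_comp_monotone_le hp (stepValue φ) ((partitionIndex_mono t).comp hs)
    _ ≤ 2 := by linarith

theorem rpow_sum_norm_sub_le_of_hasSum {α H : Type*} [SeminormedAddCommGroup H]
    [NormedSpace ℝ H] {p : ℝ} (hp : 1 ≤ p) {K : ℕ} (s : Fin (K + 1) → α) {u : α → H}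
    {lam : ℕ → ℝ} {A : ℕ → α → H} {C : ℝ}
    (hA : ∀ k, (∑ j : Fin K, ‖A k (s j.succ) - A k (s j.castSucc)‖ ^ p) ^ (1 / p) ≤ C)
    (hlam : Summable fun k => |lam k|) (hu : ∀ x, HasSum (fun k => lam k • A k x) (u x)) :
    (∑ j : Fin K, ‖u (s j.succ) - u (s j.castSucc)‖ ^ p) ^ (1 / p) ≤ C * ∑' k, |lam k| := by
  have : Fact (1 ≤ ENNReal.ofReal p) := ⟨ENNReal.one_le_ofReal.mpr hp⟩
  let e := (PiLp.continuousLinearEquiv (ENNReal.ofReal p) ℝ fun _ : Fin K => H).symm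
  let increments (v : α → H) (j : Fin K) : H := v (s j.succ) - v (s j.castSucc)
  have hnorm (v : α → H) :
      ‖e (increments v)‖ = (∑ j : Fin K, ‖v (s j.succ) - v (s j.castSucc)‖ ^ p) ^ (1 / p) := by
    rw [PiLp.norm_eq_sum (by rw [ENNReal.toReal_ofReal (by linarith)]; linarith),
      ENNReal.toReal_ofReal (by linarith)]
    rfl
  have hsum : HasSum (fun k => lam k • e (increments (A k))) (e (increments u)) := by
    simp_rw [← map_smul]
    refine e.hasSum.mpr (Pi.hasSum.mpr fun j => ?_)
    simpa [increments, smul_sub] using (hu (s j.succ)).sub (hu (s j.castSucc))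
  rw [← hnorm, mul_comm, ← tsum_mul_right]
  refine hsum.norm_le_of_bounded (hlam.mul_right C).hasSum fun k => ?_
  rw [norm_smul, Real.norm_eq_abs, hnorm]
  exact mul_le_mul_of_nonneg_left (hA k) (abs_nonneg _)

theorem atoms_have_bounded_variation_general {H : Type*} [NormedAddCommGroup H]
    [InnerProductSpace ℝ H] (p a b : ℝ) (hp : 1 ≤ p) :
    (∀ f : ℝ → H, IsUpAtom p a b f → sSup (variationSums p f a b) ≤ 2) ∧
    (∀ (u : ℝ → H) (lam : ℕ → ℝ) (A : ℕ → ℝ → H),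
      (∀ k, IsUpAtom p a b (A k)) →
      Summable (fun k => |lam k|) →
      (∀ s : ℝ, HasSum (fun k => lam k • A k s) (u s)) →
      sSup (variationSums p u a b) ≤ 2 * ∑' k, |lam k|) := by
  refine ⟨fun f hf => ?_, fun u lam A hA hlam hu => ?_⟩
  · refine Real.sSup_le ?_ zero_le_two
    rintro _ ⟨K, s, hs, -, -, rfl⟩
    exact hf.rpow_sum_norm_sub_le_two hp hs.monotone
  · refine Real.sSup_le ?_ (by positivity)
    rintro _ ⟨K, s, hs, -, -, rfl⟩
    exact rpow_sum_norm_sub_le_of_hasSum hp s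
      (fun k => (hA k).rpow_sum_norm_sub_le_two hp hs.monotone) hlam hu

/-- Every `U^p`-atom has `V^p`-norm at most `2`, and consequently every atomic
representation `u = Σ_k λ_k a_k` yields `‖u‖_{V^p} ≤ 2 Σ_k |λ_k|`, i.e. the embedding
`U^p ↪ V^p` with constant `2`. -/
theorem atoms_have_bounded_variation {H : Type*} [NormedAddCommGroup H]
    [InnerProductSpace ℝ H] (p a b : ℝ) (hp : 1 ≤ p) (hab : a < b) :
    (∀ f : ℝ → H, IsUpAtom p a b f → sSup (variationSums p f a b) ≤ 2) ∧
    (∀ (u : ℝ → H) (lam : ℕ → ℝ) (A : ℕ → ℝ → H),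
      (∀ k, IsUpAtom p a b (A k)) →
      Summable (fun k => |lam k|) →
      (∀ s : ℝ, HasSum (fun k => lam k • A k s) (u s)) →
      sSup (variationSums p u a b) ≤ 2 * ∑' k, |lam k|) :=
  atoms_have_bounded_variation_general p a b hp
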